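/- Let φ be a formula of BndSCL, 𝔄 a suitable model, s a suitable assignment and n ∈ ℕ. Then Eloise has a winning strategy in the n-bounded evaluation game G_n(𝔄,s,φ) if and only if Eloise has a winning strategy in the standard first-order evaluation game G(𝔄,s,Φⁿ_φ) for the n-th approximant Φⁿ_φ, i.e. if and only if 𝔄,s ⊨ Φⁿ_φ in first-order logic. -/

import Mathlib

/-
Common formalization of the logics SCL (static computation logic, unbounded
game-theoretic semantics) and BndSCL (bounded semantics), following the paper
"First-order logic with self-reference".

* Games are played on arbitrary (possibly infinite) arenas; plays are maximal
  walks; strategies are functions from finite walks (histories) to positions;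
  infinite plays, and finite plays ending at a dead end where `win` holds for
  neither player, are won by nobody.
* The semantic games are formalized with positions carrying the current
  (sub)formula, an environment binding each label symbol to the labelled
  formula it most recently named (this is the standard closure rendering of
  "reference formula of a claim-symbol occurrence"), the current assignment
  and the polarity (+ = true, − = false).  The bounded game additionally
  carries a clock value.
-/

set_option autoImplicit false

universe u

/-! ## Generic two-player games on (possibly infinite) arenas -/

inductive Player : Type
  | eloise : Player
  | abelard : Player
deriving DecidableEq

def Player.opp : Player → Player
  | .eloise => .abelard
  | .abelard => .eloise

/-- A game arena: an ownership function (corresponding to the partition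
`V = V₀ ∪ V₁`), an edge relation, and a predicate telling which player (if
any) wins a play ending at a given dead-end position. -/
structure GameArena (P : Type u) where
  turn : P → Player
  edge : P → P → Prop
  win : P → Player → Prop

namespace GameArena

variable {P : Type u} (A : GameArena P)

def DeadEnd (u : P) : Prop := ∀ x, ¬ A.edge u x

/-- `w` is a finite nonempty walk whose first element is `v`. -/
def IsWalkFrom (v : P) (w : List P) : Prop :=
  w.head? = some v ∧ List.Chain' A.edge w

/-- A finite (maximal) play from `v`: a walk whose last element is a dead end. -/
def IsFinitePlay (v : P) (w : List P) : Prop :=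
  A.IsWalkFrom v w ∧ ∀ u, w.getLast? = some u → A.DeadEnd u

/-- An infinite play from `v`. -/
def IsInfPlay (v : P) (f : ℕ → P) : Prop :=
  f 0 = v ∧ ∀ n, A.edge (f n) (f (n + 1))

/-- A strategy (a function from histories to positions) of player `pl` is
legal if it always prescribes a move along an edge whenever a move exists. -/
def LegalFor (pl : Player) (v : P) (σ : List P → P) : Prop :=
  ∀ w u, A.IsWalkFrom v w → w.getLast? = some u → A.turn u = pl →
    (∃ x, A.edge u x) → A.edge u (σ w)

/-- The strategy `σ` of player `pl` is followed in the finite play `w`. -/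
def FollowsFin (pl : Player) (σ : List P → P) (w : List P) : Prop :=
  ∀ q u x, (q ++ [x]) <+: w → q.getLast? = some u → A.turn u = pl → x = σ q

/-- The strategy `σ` of player `pl` is followed in the infinite play `f`. -/
def FollowsInf (pl : Player) (σ : List P → P) (f : ℕ → P) : Prop :=
  ∀ n, A.turn (f n) = pl →
    f (n + 1) = σ (List.ofFn fun i : Fin (n + 1) => f i)

/-- `σ` is a winning strategy of player `pl` from `v`: it is legal, every
finite maximal play following it ends in a dead end won by `pl`, and no
infinite play follows it (infinite plays are won by neither player). -/
def WinningStrategy (pl : Player) (v : P) (σ : List P → P) : Prop :=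
  A.LegalFor pl v σ ∧
  (∀ w, A.IsFinitePlay v w → A.FollowsFin pl σ w →
      ∃ u, w.getLast? = some u ∧ A.win u pl) ∧
  (∀ f, A.IsInfPlay v f → ¬ A.FollowsInf pl σ f)

def HasWinningStrategy (pl : Player) (v : P) : Prop :=
  ∃ σ : List P → P, A.WinningStrategy pl v σ

end GameArena

/-- A positional strategy: its moves depend only on the current position. -/
def Positional {P : Type u} (σ : List P → P) : Prop :=
  ∀ q q' : List P, q.getLast? = q'.getLast? → σ q = σ q'

/-! ## Syntax of SCL / BndSCL -/

/-- A purely relational vocabulary. -/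
structure Vocab : Type 1 where
  Rel : Type
  arity : Rel → ℕ

/-- Formulas of SCL / BndSCL over the vocabulary `V`.  Variables and label
symbols are natural numbers; `claim L` is the claim symbol `C_L` and
`lab L φ` is the labelled formula `L φ`. -/
inductive SCLFormula (V : Vocab) : Type
  | bot : SCLFormula V
  | eq (x y : ℕ) : SCLFormula V
  | rel (R : V.Rel) (args : Fin (V.arity R) → ℕ) : SCLFormula V
  | claim (L : ℕ) : SCLFormula V
  | not (φ : SCLFormula V) : SCLFormula V
  | and (φ ψ : SCLFormula V) : SCLFormula V
  | or (φ ψ : SCLFormula V) : SCLFormula V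
  | ex (x : ℕ) (φ : SCLFormula V) : SCLFormula V
  | all (x : ℕ) (φ : SCLFormula V) : SCLFormula V
  | lab (L : ℕ) (φ : SCLFormula V) : SCLFormula V

namespace SCLFormula

variable {V : Vocab}

/-- First-order atoms. -/
def IsFOAtom : SCLFormula V → Prop
  | .bot => True
  | .eq _ _ => True
  | .rel _ _ => True
  | _ => False

/-- Purely first-order formulas (no claim symbols, no label symbols). -/
def IsFO : SCLFormula V → Prop
  | .bot => True
  | .eq _ _ => True
  | .rel _ _ => True
  | .claim _ => False
  | .not φ => IsFO φ
  | .and φ ψ => IsFO φ ∧ IsFO ψ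
  | .or φ ψ => IsFO φ ∧ IsFO ψ
  | .ex _ φ => IsFO φ
  | .all _ φ => IsFO φ
  | .lab _ _ => False

/-- Free (individual) variables. -/
def freeVars : SCLFormula V → Finset ℕ
  | .bot => ∅
  | .eq x y => {x, y}
  | .rel _ a => Finset.image a Finset.univ
  | .claim _ => ∅
  | .not φ => freeVars φ
  | .and φ ψ => freeVars φ ∪ freeVars ψ
  | .or φ ψ => freeVars φ ∪ freeVars ψ
  | .ex x φ => freeVars φ \ {x}
  | .all x φ => freeVars φ \ {x}
  | .lab _ φ => freeVars φ

/-- All variables occurring in a formula (free or bound). -/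
def vars : SCLFormula V → Finset ℕ
  | .bot => ∅
  | .eq x y => {x, y}
  | .rel _ a => Finset.image a Finset.univ
  | .claim _ => ∅
  | .not φ => vars φ
  | .and φ ψ => vars φ ∪ vars ψ
  | .or φ ψ => vars φ ∪ vars ψ
  | .ex x φ => insert x (vars φ)
  | .all x φ => insert x (vars φ)
  | .lab _ φ => vars φ

/-- Sentences: formulas with no free variables. -/
def IsSentence (φ : SCLFormula V) : Prop := freeVars φ = ∅

end SCLFormula

/-! ## Structures and first-order (Tarski) satisfaction -/

/-- A (suitable) model for vocabulary `V`: a nonempty domain together with an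
interpretation of all relation symbols. -/
structure Struct (V : Vocab) where
  Dom : Type u
  dom_nonempty : Nonempty Dom
  interp : ∀ R : V.Rel, (Fin (V.arity R) → Dom) → Prop

attribute [instance] Struct.dom_nonempty

/-- Satisfaction of atoms (false on non-atoms). -/
def atomSat {V : Vocab} (M : Struct.{u} V) (s : ℕ → M.Dom) : SCLFormula V → Prop
  | .bot => False
  | .eq x y => s x = s y
  | .rel R a => M.interp R fun i => s (a i)
  | _ => False

/-- Standard (Tarski) first-order satisfaction.  It is only meaningful on
purely first-order formulas; claim symbols are interpreted as `False` and
label symbols are ignored. -/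
def FOSat {V : Vocab} (M : Struct.{u} V) : (ℕ → M.Dom) → SCLFormula V → Prop
  | _, .bot => False
  | s, .eq x y => s x = s y
  | s, .rel R a => M.interp R fun i => s (a i)
  | _, .claim _ => False
  | s, .not φ => ¬ FOSat M s φ
  | s, .and φ ψ => FOSat M s φ ∧ FOSat M s ψ
  | s, .or φ ψ => FOSat M s φ ∨ FOSat M s ψ
  | s, .ex x φ => ∃ a : M.Dom, FOSat M (Function.update s x a) φ
  | s, .all x φ => ∀ a : M.Dom, FOSat M (Function.update s x a) φ
  | s, .lab _ φ => FOSat M s φ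

/-! ## The evaluation games -/

/-- A position of the semantic game: the current formula, the environment
recording for each label symbol `L` the reference formula `L ψ` it currently
names, the current assignment, and the polarity (`true` = `+`). -/
structure SCLPos (V : Vocab) (D : Type u) : Type u where
  form : SCLFormula V
  env : ℕ → Option (SCLFormula V)
  asg : ℕ → D
  pol : Bool

/-- Which player moves at a given position. (At positions with at most one
successor the owner is irrelevant; we let Eloise own them.) -/
def posTurn {V : Vocab} {D : Type u} (p : SCLPos V D) : Player :=
  match p.form, p.pol with
  | .and _ _, true => .abelard
  | .and _ _, false => .eloise
  | .or _ _, true => .eloise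
  | .or _ _, false => .abelard
  | .all _ _, true => .abelard
  | .all _ _, false => .eloise
  | .ex _ _, true => .eloise
  | .ex _ _, false => .abelard
  | _, _ => .eloise

/-- Who wins a play ending at a given position: at an FO-atom position,
Eloise wins iff the atom's truth value agrees with the polarity, and Abelard
wins otherwise; plays ending anywhere else (e.g. at a claim symbol with no
reference formula, or with clock value 0) are won by neither player. -/
def posWin {V : Vocab} (M : Struct.{u} V) (p : SCLPos V M.Dom) : Player → Prop
  | .eloise => p.form.IsFOAtom ∧ (atomSat M p.asg p.form ↔ p.pol = true)
  | .abelard => p.form.IsFOAtom ∧ ¬ (atomSat M p.asg p.form ↔ p.pol = true)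

/-- Moves of the unbounded evaluation game `G_∞`. -/
inductive UStep {V : Vocab} (M : Struct.{u} V) :
    SCLPos V M.Dom → SCLPos V M.Dom → Prop
  | neg (φ : SCLFormula V) (e : ℕ → Option (SCLFormula V)) (s : ℕ → M.Dom) (b : Bool) :
      UStep M ⟨.not φ, e, s, b⟩ ⟨φ, e, s, !b⟩
  | andLeft (φ ψ : SCLFormula V) (e : ℕ → Option (SCLFormula V)) (s : ℕ → M.Dom) (b : Bool) :
      UStep M ⟨.and φ ψ, e, s, b⟩ ⟨φ, e, s, b⟩
  | andRight (φ ψ : SCLFormula V) (e : ℕ → Option (SCLFormula V)) (s : ℕ → M.Dom) (b : Bool) :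
      UStep M ⟨.and φ ψ, e, s, b⟩ ⟨ψ, e, s, b⟩
  | orLeft (φ ψ : SCLFormula V) (e : ℕ → Option (SCLFormula V)) (s : ℕ → M.Dom) (b : Bool) :
      UStep M ⟨.or φ ψ, e, s, b⟩ ⟨φ, e, s, b⟩
  | orRight (φ ψ : SCLFormula V) (e : ℕ → Option (SCLFormula V)) (s : ℕ → M.Dom) (b : Bool) :
      UStep M ⟨.or φ ψ, e, s, b⟩ ⟨ψ, e, s, b⟩
  | exStep (x : ℕ) (φ : SCLFormula V) (e : ℕ → Option (SCLFormula V)) (s : ℕ → M.Dom)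
      (b : Bool) (a : M.Dom) :
      UStep M ⟨.ex x φ, e, s, b⟩ ⟨φ, e, Function.update s x a, b⟩
  | allStep (x : ℕ) (φ : SCLFormula V) (e : ℕ → Option (SCLFormula V)) (s : ℕ → M.Dom)
      (b : Bool) (a : M.Dom) :
      UStep M ⟨.all x φ, e, s, b⟩ ⟨φ, e, Function.update s x a, b⟩
  | labStep (L : ℕ) (φ : SCLFormula V) (e : ℕ → Option (SCLFormula V)) (s : ℕ → M.Dom)
      (b : Bool) :
      UStep M ⟨.lab L φ, e, s, b⟩ ⟨φ, Function.update e L (some (.lab L φ)), s, b⟩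
  | claimStep (L : ℕ) (e : ℕ → Option (SCLFormula V)) (s : ℕ → M.Dom) (b : Bool)
      (χ : SCLFormula V) (h : e L = some χ) :
      UStep M ⟨.claim L, e, s, b⟩ ⟨χ, e, s, b⟩

/-- Moves of the `n`-bounded evaluation game: positions additionally carry a
clock value, which decreases by one exactly at jumps from a claim symbol to
its reference formula; a claim-symbol position with clock value `0` is a dead
end won by neither player. -/
inductive BStep {V : Vocab} (M : Struct.{u} V) :
    SCLPos V M.Dom × ℕ → SCLPos V M.Dom × ℕ → Prop
  | neg (φ : SCLFormula V) (e : ℕ → Option (SCLFormula V)) (s : ℕ → M.Dom) (b : Bool) (n : ℕ) :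
      BStep M (⟨.not φ, e, s, b⟩, n) (⟨φ, e, s, !b⟩, n)
  | andLeft (φ ψ : SCLFormula V) (e : ℕ → Option (SCLFormula V)) (s : ℕ → M.Dom) (b : Bool)
      (n : ℕ) : BStep M (⟨.and φ ψ, e, s, b⟩, n) (⟨φ, e, s, b⟩, n)
  | andRight (φ ψ : SCLFormula V) (e : ℕ → Option (SCLFormula V)) (s : ℕ → M.Dom) (b : Bool)
      (n : ℕ) : BStep M (⟨.and φ ψ, e, s, b⟩, n) (⟨ψ, e, s, b⟩, n)
  | orLeft (φ ψ : SCLFormula V) (e : ℕ → Option (SCLFormula V)) (s : ℕ → M.Dom) (b : Bool)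
      (n : ℕ) : BStep M (⟨.or φ ψ, e, s, b⟩, n) (⟨φ, e, s, b⟩, n)
  | orRight (φ ψ : SCLFormula V) (e : ℕ → Option (SCLFormula V)) (s : ℕ → M.Dom) (b : Bool)
      (n : ℕ) : BStep M (⟨.or φ ψ, e, s, b⟩, n) (⟨ψ, e, s, b⟩, n)
  | exStep (x : ℕ) (φ : SCLFormula V) (e : ℕ → Option (SCLFormula V)) (s : ℕ → M.Dom)
      (b : Bool) (n : ℕ) (a : M.Dom) :
      BStep M (⟨.ex x φ, e, s, b⟩, n) (⟨φ, e, Function.update s x a, b⟩, n)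
  | allStep (x : ℕ) (φ : SCLFormula V) (e : ℕ → Option (SCLFormula V)) (s : ℕ → M.Dom)
      (b : Bool) (n : ℕ) (a : M.Dom) :
      BStep M (⟨.all x φ, e, s, b⟩, n) (⟨φ, e, Function.update s x a, b⟩, n)
  | labStep (L : ℕ) (φ : SCLFormula V) (e : ℕ → Option (SCLFormula V)) (s : ℕ → M.Dom)
      (b : Bool) (n : ℕ) :
      BStep M (⟨.lab L φ, e, s, b⟩, n) (⟨φ, Function.update e L (some (.lab L φ)), s, b⟩, n)
  | claimStep (L : ℕ) (e : ℕ → Option (SCLFormula V)) (s : ℕ → M.Dom) (b : Bool)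
      (χ : SCLFormula V) (n : ℕ) (h : e L = some χ) :
      BStep M (⟨.claim L, e, s, b⟩, n + 1) (⟨χ, e, s, b⟩, n)

/-- The unbounded evaluation game `G_∞(𝔄, ·, ·)` as a game arena. -/
def gameU {V : Vocab} (M : Struct.{u} V) : GameArena (SCLPos V M.Dom) where
  turn := posTurn
  edge := UStep M
  win := posWin M

/-- The bounded evaluation games `G_n(𝔄, ·, ·)` (for all clock values `n`
simultaneously) as a game arena. -/
def gameB {V : Vocab} (M : Struct.{u} V) : GameArena (SCLPos V M.Dom × ℕ) where
  turn p := posTurn p.1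
  edge := BStep M
  win p := posWin M p.1

/-- The initial position of the evaluation game for `φ` under assignment `s`:
empty environment and positive polarity. -/
def initPos {V : Vocab} {D : Type u} (φ : SCLFormula V) (s : ℕ → D) : SCLPos V D :=
  ⟨φ, fun _ => none, s, true⟩

/-- Truth under the unbounded semantics (the logic SCL):
`𝔄,s ⊨ φ` iff Eloise has a winning strategy in `G_∞(𝔄,s,φ)`. -/
def SCLTrue {V : Vocab} (M : Struct.{u} V) (s : ℕ → M.Dom) (φ : SCLFormula V) : Prop :=
  (gameU M).HasWinningStrategy .eloise (initPos φ s)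

/-! ### The bounded game `G_ω` -/

/-- Positions of the game `G_ω`: the initial position (where Abelard picks a
number `n'`), the intermediate positions (where Eloise picks some `n ≥ n'`),
and the positions of the `n`-bounded games. -/
inductive GOPos (V : Vocab) (D : Type u) : Type u
  | start : GOPos V D
  | mid (n' : ℕ) : GOPos V D
  | inner (p : SCLPos V D) (clock : ℕ) : GOPos V D

inductive GOStep {V : Vocab} (M : Struct.{u} V) (φ : SCLFormula V) (s : ℕ → M.Dom) :
    GOPos V M.Dom → GOPos V M.Dom → Prop
  | abelardPick (n' : ℕ) : GOStep M φ s .start (.mid n')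
  | eloisePick (n' n : ℕ) (h : n' ≤ n) : GOStep M φ s (.mid n') (.inner (initPos φ s) n)
  | play (p q : SCLPos V M.Dom) (m k : ℕ) (h : BStep M (p, m) (q, k)) :
      GOStep M φ s (.inner p m) (.inner q k)

def goTurn {V : Vocab} {D : Type u} : GOPos V D → Player
  | .start => .abelard
  | .mid _ => .eloise
  | .inner p _ => posTurn p

def goWin {V : Vocab} (M : Struct.{u} V) : GOPos V M.Dom → Player → Prop
  | .inner p _, pl => posWin M p pl
  | _, _ => False

/-- The bounded evaluation game `G_ω(𝔄,s,φ)`: Abelard picks `n' ∈ ℕ`, then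
Eloise picks `n ≥ n'`, and then `G_n(𝔄,s,φ)` is played. -/
def gameOmega {V : Vocab} (M : Struct.{u} V) (φ : SCLFormula V) (s : ℕ → M.Dom) :
    GameArena (GOPos V M.Dom) where
  turn := goTurn
  edge := GOStep M φ s
  win := goWin M

/-- Truth under the bounded semantics (the logic BndSCL):
`𝔄,s ⊨_ω φ` iff Eloise has a winning strategy in `G_ω(𝔄,s,φ)`. -/
def BndTrue {V : Vocab} (M : Struct.{u} V) (s : ℕ → M.Dom) (φ : SCLFormula V) : Prop :=
  (gameOmega M φ s).HasWinningStrategy .eloise .start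

/-! ## Approximants -/

/-- Auxiliary structural recursion for approximants: `k` tells what to put in
place of a claim symbol.  Label symbols are deleted (while updating the
environment), and polarity is tracked through negations. -/
def approxCore {V : Vocab}
    (k : (ℕ → Option (SCLFormula V)) → Bool → ℕ → SCLFormula V) :
    (ℕ → Option (SCLFormula V)) → Bool → SCLFormula V → SCLFormula V
  | _, _, .bot => .bot
  | _, _, .eq x y => .eq x y
  | _, _, .rel R a => .rel R a
  | e, b, .claim L => k e b L
  | e, b, .not φ => .not (approxCore k e (!b) φ)
  | e, b, .and φ ψ => .and (approxCore k e b φ) (approxCore k e b ψ)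
  | e, b, .or φ ψ => .or (approxCore k e b φ) (approxCore k e b ψ)
  | e, b, .ex x φ => .ex x (approxCore k e b φ)
  | e, b, .all x φ => .all x (approxCore k e b φ)
  | e, b, .lab L φ => approxCore k (Function.update e L (some (.lab L φ))) b φ

/-- `approx n e b φ` unfolds each claim symbol of `φ` (in environment `e`,
under polarity `b`) through `n` jumps to reference formulas; claim symbols
reached with exhausted budget (or with no reference formula) are replaced by
`⊥` at positive occurrences and `⊤` (i.e. `¬⊥`) at negative occurrences, and
all label symbols are deleted. -/
def approx {V : Vocab} : ℕ → (ℕ → Option (SCLFormula V)) → Bool → SCLFormula V → SCLFormula V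
  | 0 => approxCore fun _ b _ => if b then .bot else .not .bot
  | n + 1 => approxCore fun e b L =>
      match e L with
      | some χ => approx n e b χ
      | none => if b then .bot else .not .bot

/-- The `n`-th approximant `Φⁿ_φ` of `φ`: the first-order formula obtained
from the `n`-th unfolding of `φ` by deleting all label symbols and replacing
positive claim occurrences by `⊥` and negative ones by `⊤`. -/
def approximant {V : Vocab} (φ : SCLFormula V) (n : ℕ) : SCLFormula V :=
  approx n (fun _ => none) true φ

/-!
Every move of a bounded game either lowers the clock or keeps it and passes to a proper
subformula, so all plays are finite. In a game without infinite plays, Eloise wins at a dead end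
iff it is a winning end for her, at her own positions iff she wins at some successor, and at
Abelard's iff she wins at all successors. Read along the moves of `G_n`, these equations are the
Tarski clauses of the `n`-th approximant: the jump from a claim symbol at clock `k + 1` is the
unfolding of that claim symbol into its reference formula with budget `k`, and a stuck claim
position, won by nobody, matches `⊥` at positive and `⊤` at negative polarity. The equivalence is
proved for all environments and polarities by induction on the clock and, inside, on the formula.
-/

namespace GameArena

variable {P : Type u} {A : GameArena P}

theorem isWalkFrom_singleton {v a : P} : A.IsWalkFrom v [a] ↔ a = v :=
  ⟨fun h => Option.some.inj h.1, fun h => ⟨h ▸ rfl, List.isChain_singleton a⟩⟩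

theorem isWalkFrom_cons_cons {v a w : P} {q : List P} :
    A.IsWalkFrom v (a :: w :: q) ↔ a = v ∧ A.edge v w ∧ A.IsWalkFrom w (w :: q) where
  mp h :=
    have hc := List.isChain_cons_cons.1 h.2
    ⟨Option.some.inj h.1, Option.some.inj h.1 ▸ hc.1, rfl, hc.2⟩
  mpr := fun ⟨ha, hvw, _, hc⟩ => ⟨congrArg some ha, List.isChain_cons_cons.2 ⟨ha ▸ hvw, hc⟩⟩

theorem IsWalkFrom.exists_eq_cons {v : P} {q : List P} (h : A.IsWalkFrom v q) :
    ∃ t, q = v :: t := by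
  obtain _ | ⟨a, t⟩ := q
  · simp [IsWalkFrom] at h
  · exact ⟨t, by simpa [IsWalkFrom] using h.1⟩

theorem isFinitePlay_singleton {v a : P} : A.IsFinitePlay v [a] ↔ a = v ∧ A.DeadEnd v := by
  simp only [IsFinitePlay, isWalkFrom_singleton, List.getLast?_singleton, Option.some.injEq]
  constructor
  · rintro ⟨rfl, h⟩; exact ⟨rfl, h a rfl⟩
  · rintro ⟨rfl, h⟩; exact ⟨rfl, fun u hu => hu ▸ h⟩

theorem isFinitePlay_cons_cons {v a w : P} {q : List P} :
    A.IsFinitePlay v (a :: w :: q) ↔ a = v ∧ A.edge v w ∧ A.IsFinitePlay w (w :: q) := by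
  simp only [IsFinitePlay, isWalkFrom_cons_cons, List.getLast?_cons_cons, and_assoc]

theorem followsFin_singleton (pl : Player) (σ : List P → P) (a : P) : A.FollowsFin pl σ [a] := by
  intro q u x hpre hlast _
  obtain _ | ⟨b, t⟩ := q
  · simp at hlast
  · have := hpre.length_le
    simp at this

theorem followsFin_cons_cons {pl : Player} {σ : List P → P} {a w : P} {q : List P} :
    A.FollowsFin pl σ (a :: w :: q) ↔
      (A.turn a = pl → w = σ [a]) ∧ A.FollowsFin pl (fun h => σ (a :: h)) (w :: q) := by
  constructor
  · intro h
    refine ⟨fun ht => h [a] a w ⟨q, rfl⟩ rfl ht, fun r u x hpre hlast ht => ?_⟩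
    obtain _ | ⟨b, t⟩ := r
    · simp at hlast
    · exact h (a :: b :: t) u x (List.cons_prefix_cons.2 ⟨rfl, hpre⟩)
        (by rwa [List.getLast?_cons_cons]) ht
  · rintro ⟨hfirst, hrest⟩ r u x hpre hlast ht
    obtain _ | ⟨b, r⟩ := r
    · simp at hlast
    simp only [List.cons_append, List.cons_prefix_cons] at hpre
    obtain ⟨rfl, hpre⟩ := hpre
    obtain _ | ⟨c, t⟩ := r
    · obtain ⟨rfl, -⟩ := List.cons_prefix_cons.1 hpre
      obtain rfl : b = u := by simpa using hlast
      exact hfirst ht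
    · exact hrest (c :: t) u x hpre (by rwa [List.getLast?_cons_cons] at hlast) ht

theorem IsWalkFrom.eq_singleton_of_deadEnd {v : P} {q : List P} (hq : A.IsWalkFrom v q)
    (hd : A.DeadEnd v) : q = [v] := by
  obtain ⟨_ | ⟨w, t⟩, rfl⟩ := hq.exists_eq_cons
  · rfl
  · exact absurd (isWalkFrom_cons_cons.1 hq).2.1 (hd w)

theorem FollowsFin.congr {pl : Player} {σ σ' : List P → P} {w : P} {q : List P}
    (h : A.FollowsFin pl σ (w :: q)) (hσ : ∀ r, σ' (w :: r) = σ (w :: r)) :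
    A.FollowsFin pl σ' (w :: q) := by
  intro r u x hpre hlast ht
  obtain _ | ⟨b, r⟩ := r
  · simp at hlast
  obtain ⟨rfl, -⟩ := List.cons_prefix_cons.1 hpre
  rw [hσ]
  exact h _ u x hpre hlast ht

theorem exists_forall_legalFor [Nonempty P] (pl : Player) :
    ∃ σ : List P → P, ∀ v, A.LegalFor pl v σ := by
  have hnext : ∀ u, ∃ x, (∃ y, A.edge u y) → A.edge u x := fun u =>
    (em (∃ y, A.edge u y)).elim (fun ⟨y, hy⟩ => ⟨y, fun _ => hy⟩)
      fun h => ⟨Classical.arbitrary P, fun h' => absurd h' h⟩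
  choose next hnext using hnext
  refine ⟨fun q => next (q.getLast?.getD (Classical.arbitrary P)), ?_⟩
  intro v q u _ hlast _ hex
  simpa [hlast] using hnext u hex

theorem WinningStrategy.shift (hfin : ∀ v f, ¬ A.IsInfPlay v f) {pl : Player} {v w : P}
    {σ : List P → P} (hσ : A.WinningStrategy pl v σ) (hvw : A.edge v w)
    (hsel : A.turn v = pl → w = σ [v]) : A.WinningStrategy pl w (fun q => σ (v :: q)) := by
  refine ⟨fun q u hq hlast ht hex => ?_, fun p hp hf => ?_, fun f hf _ => hfin w f hf⟩
  · obtain ⟨t, rfl⟩ := hq.exists_eq_cons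
    exact hσ.1 _ u (isWalkFrom_cons_cons.2 ⟨rfl, hvw, hq⟩)
      (by rwa [List.getLast?_cons_cons]) ht hex
  · obtain ⟨t, rfl⟩ := hp.1.exists_eq_cons
    obtain ⟨u, hu, hwin⟩ := hσ.2.1 _ (isFinitePlay_cons_cons.2 ⟨rfl, hvw, hp⟩)
      (followsFin_cons_cons.2 ⟨hsel, hf⟩)
    exact ⟨u, by rwa [List.getLast?_cons_cons] at hu, hwin⟩

-- Histories from `v` have the form `v :: w :: rest`: after the first move `v → w` (which is `w₀`
-- when the move is ours) the strategy `τ w` takes over.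
def glue (w₀ : P) (τ : P → List P → P) : List P → P
  | _ :: w :: rest => τ w (w :: rest)
  | _ => w₀

theorem winningStrategy_glue (hfin : ∀ v f, ¬ A.IsInfPlay v f) {pl : Player} {v w₀ : P}
    {τ : P → List P → P} (hne : ∃ x, A.edge v x) (hw₀ : A.turn v = pl → A.edge v w₀)
    (hlegal : ∀ w, A.edge v w → A.LegalFor pl w (τ w))
    (hwin : ∀ w, A.edge v w → (A.turn v = pl → w = w₀) → A.WinningStrategy pl w (τ w)) :
    A.WinningStrategy pl v (glue w₀ τ) := by
  refine ⟨fun q u hq hlast ht hex => ?_, fun p hp hf => ?_, fun f hf _ => hfin v f hf⟩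
  · obtain ⟨_ | ⟨w, t⟩, rfl⟩ := hq.exists_eq_cons
    · obtain rfl : v = u := by simpa using hlast
      exact hw₀ ht
    · obtain ⟨-, hvw, hwt⟩ := isWalkFrom_cons_cons.1 hq
      exact hlegal w hvw _ u hwt (by rwa [List.getLast?_cons_cons] at hlast) ht hex
  · obtain ⟨_ | ⟨w, t⟩, rfl⟩ := hp.1.exists_eq_cons
    · obtain ⟨x, hx⟩ := hne
      exact absurd hx ((isFinitePlay_singleton.1 hp).2 x)
    · obtain ⟨-, hvw, hwt⟩ := isFinitePlay_cons_cons.1 hp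
      obtain ⟨hsel, hrest⟩ := followsFin_cons_cons.1 hf
      obtain ⟨u, hu, hwin⟩ := (hwin w hvw hsel).2.1 _ hwt (hrest.congr fun _ => rfl)
      exact ⟨u, by rwa [List.getLast?_cons_cons], hwin⟩

theorem hasWinningStrategy_of_forall_edge (hfin : ∀ v f, ¬ A.IsInfPlay v f) {pl : Player}
    {v w₀ : P} (hne : ∃ x, A.edge v x) (hw₀ : A.turn v = pl → A.edge v w₀)
    (hwin : ∀ w, A.edge v w → (A.turn v = pl → w = w₀) → A.HasWinningStrategy pl w) :
    A.HasWinningStrategy pl v := by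
  classical
  have : Nonempty P := ⟨v⟩
  obtain ⟨σ₀, hσ₀⟩ := A.exists_forall_legalFor pl
  let τ : P → List P → P := fun w =>
    if h : A.HasWinningStrategy pl w then h.choose else σ₀
  refine ⟨glue w₀ τ, winningStrategy_glue hfin hne hw₀ (fun w _ => ?_) fun w hvw hsel => ?_⟩
  · by_cases h : A.HasWinningStrategy pl w
    · simpa [τ, h] using h.choose_spec.1
    · simpa [τ, h] using hσ₀ w
  · have h := hwin w hvw hsel
    simpa [τ, h] using h.choose_spec

theorem hasWinningStrategy_iff_of_deadEnd (hfin : ∀ v f, ¬ A.IsInfPlay v f) {pl : Player}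
    {v : P} (hd : A.DeadEnd v) : A.HasWinningStrategy pl v ↔ A.win v pl := by
  constructor
  · rintro ⟨σ, hσ⟩
    obtain ⟨u, hu, hwin⟩ :=
      hσ.2.1 [v] (isFinitePlay_singleton.2 ⟨rfl, hd⟩) (followsFin_singleton pl σ v)
    obtain rfl : v = u := by simpa using hu
    exact hwin
  · intro hwin
    refine ⟨fun _ => v, fun q u hq hlast _ ⟨x, hx⟩ => ?_, fun p hp _ => ?_,
      fun f hf _ => hfin v f hf⟩
    · obtain rfl : v = u := by simpa [hq.eq_singleton_of_deadEnd hd] using hlast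
      exact absurd hx (hd x)
    · exact ⟨v, by simp [hp.1.eq_singleton_of_deadEnd hd], hwin⟩

theorem hasWinningStrategy_iff_exists_of_turn_eq (hfin : ∀ v f, ¬ A.IsInfPlay v f)
    {pl : Player} {v : P} (ht : A.turn v = pl) (hne : ∃ x, A.edge v x) :
    A.HasWinningStrategy pl v ↔ ∃ w, A.edge v w ∧ A.HasWinningStrategy pl w := by
  constructor
  · rintro ⟨σ, hσ⟩
    have hvw : A.edge v (σ [v]) := hσ.1 [v] v (isWalkFrom_singleton.2 rfl) rfl ht hne
    exact ⟨σ [v], hvw, _, hσ.shift hfin hvw fun _ => rfl⟩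
  · rintro ⟨w, hvw, hw⟩
    exact hasWinningStrategy_of_forall_edge hfin hne (fun _ => hvw)
      fun u _ hsel => hsel ht ▸ hw

theorem hasWinningStrategy_iff_forall_of_turn_ne (hfin : ∀ v f, ¬ A.IsInfPlay v f)
    {pl : Player} {v : P} (ht : A.turn v ≠ pl) (hne : ∃ x, A.edge v x) :
    A.HasWinningStrategy pl v ↔ ∀ w, A.edge v w → A.HasWinningStrategy pl w := by
  constructor
  · rintro ⟨σ, hσ⟩ w hvw
    exact ⟨_, hσ.shift hfin hvw fun h => absurd h ht⟩
  · intro h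
    exact hasWinningStrategy_of_forall_edge hfin hne (w₀ := v) (fun h' => absurd h' ht)
      fun w hvw _ => h w hvw

end GameArena

section BoundedGame

variable {V : Vocab} {M : Struct.{u} V} {φ ψ : SCLFormula V} {e : ℕ → Option (SCLFormula V)}
  {s : ℕ → M.Dom} {b : Bool} {n : ℕ} {x : SCLPos V M.Dom × ℕ}

theorem bStep_lt {p q : SCLPos V M.Dom × ℕ} (h : BStep M p q) :
    toLex (q.2, sizeOf q.1.form) < toLex (p.2, sizeOf p.1.form) := by
  cases h with
  | claimStep => exact Prod.Lex.toLex_lt_toLex.2 (.inl (Nat.lt_succ_self _))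
  | _ => exact Prod.Lex.toLex_lt_toLex.2 (.inr ⟨rfl, by simp +arith⟩)

theorem gameB_not_isInfPlay (M : Struct.{u} V) (v : SCLPos V M.Dom × ℕ)
    (f : ℕ → SCLPos V M.Dom × ℕ) : ¬ (gameB M).IsInfPlay v f := by
  rintro ⟨-, hf⟩
  obtain ⟨k, hk⟩ := WellFounded.not_rel_apply_succ (r := (· < ·))
    fun k => toLex ((f k).2, sizeOf (f k).1.form)
  exact hk (bStep_lt (hf k))

theorem bStep_not_iff : BStep M (⟨.not φ, e, s, b⟩, n) x ↔ x = (⟨φ, e, s, !b⟩, n) :=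
  ⟨by rintro ⟨⟩; rfl, by rintro rfl; exact .neg ..⟩

theorem bStep_and_iff :
    BStep M (⟨.and φ ψ, e, s, b⟩, n) x ↔ x = (⟨φ, e, s, b⟩, n) ∨ x = (⟨ψ, e, s, b⟩, n) :=
  ⟨by rintro (_ | _) <;> simp, by rintro (rfl | rfl); exacts [.andLeft .., .andRight ..]⟩

theorem bStep_or_iff :
    BStep M (⟨.or φ ψ, e, s, b⟩, n) x ↔ x = (⟨φ, e, s, b⟩, n) ∨ x = (⟨ψ, e, s, b⟩, n) :=
  ⟨by rintro (_ | _) <;> simp, by rintro (rfl | rfl); exacts [.orLeft .., .orRight ..]⟩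

theorem bStep_ex_iff {y : ℕ} :
    BStep M (⟨.ex y φ, e, s, b⟩, n) x ↔ ∃ a, x = (⟨φ, e, Function.update s y a, b⟩, n) :=
  ⟨by rintro ⟨⟩; exact ⟨_, rfl⟩, by rintro ⟨a, rfl⟩; exact .exStep ..⟩

theorem bStep_all_iff {y : ℕ} :
    BStep M (⟨.all y φ, e, s, b⟩, n) x ↔ ∃ a, x = (⟨φ, e, Function.update s y a, b⟩, n) :=
  ⟨by rintro ⟨⟩; exact ⟨_, rfl⟩, by rintro ⟨a, rfl⟩; exact .allStep ..⟩

theorem bStep_lab_iff {L : ℕ} :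
    BStep M (⟨.lab L φ, e, s, b⟩, n) x ↔
      x = (⟨φ, Function.update e L (some (.lab L φ)), s, b⟩, n) :=
  ⟨by rintro ⟨⟩; rfl, by rintro rfl; exact .labStep ..⟩

theorem bStep_claim_iff {L : ℕ} :
    BStep M (⟨.claim L, e, s, b⟩, n) x ↔
      ∃ χ k, e L = some χ ∧ n = k + 1 ∧ x = (⟨χ, e, s, b⟩, k) :=
  ⟨by rintro ⟨⟩; exact ⟨_, _, ‹_›, rfl, rfl⟩,
    by rintro ⟨χ, k, h, rfl, rfl⟩; exact .claimStep _ _ _ _ _ _ h⟩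

theorem deadEnd_of_isFOAtom (hφ : φ.IsFOAtom) : (gameB M).DeadEnd (⟨φ, e, s, b⟩, n) := by
  cases φ <;> first | exact (hφ : False).elim | rintro _ ⟨⟩

theorem gameB_hasWinningStrategy_iff_exists {p : SCLPos V M.Dom} (ht : posTurn p = .eloise)
    (hne : ∃ x, BStep M (p, n) x) :
    (gameB M).HasWinningStrategy .eloise (p, n) ↔
      ∃ x, BStep M (p, n) x ∧ (gameB M).HasWinningStrategy .eloise x :=
  GameArena.hasWinningStrategy_iff_exists_of_turn_eq (gameB_not_isInfPlay M) ht hne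

theorem gameB_hasWinningStrategy_iff_forall {p : SCLPos V M.Dom} (ht : posTurn p = .abelard)
    (hne : ∃ x, BStep M (p, n) x) :
    (gameB M).HasWinningStrategy .eloise (p, n) ↔
      ∀ x, BStep M (p, n) x → (gameB M).HasWinningStrategy .eloise x :=
  GameArena.hasWinningStrategy_iff_forall_of_turn_ne (gameB_not_isInfPlay M)
    (by simp [gameB, ht]) hne

end BoundedGame

section Approx

variable {V : Vocab} (n : ℕ) (e : ℕ → Option (SCLFormula V)) (b : Bool)

theorem approx_of_isFOAtom {φ : SCLFormula V} (hφ : φ.IsFOAtom) : approx n e b φ = φ := by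
  cases φ <;> first | exact (hφ : False).elim | cases n <;> rfl

theorem approx_not (φ : SCLFormula V) : approx n e b (.not φ) = .not (approx n e (!b) φ) := by
  cases n <;> rfl

theorem approx_and (φ ψ : SCLFormula V) :
    approx n e b (.and φ ψ) = .and (approx n e b φ) (approx n e b ψ) := by
  cases n <;> rfl

theorem approx_or (φ ψ : SCLFormula V) :
    approx n e b (.or φ ψ) = .or (approx n e b φ) (approx n e b ψ) := by
  cases n <;> rfl

theorem approx_ex (x : ℕ) (φ : SCLFormula V) :
    approx n e b (.ex x φ) = .ex x (approx n e b φ) := by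
  cases n <;> rfl

theorem approx_all (x : ℕ) (φ : SCLFormula V) :
    approx n e b (.all x φ) = .all x (approx n e b φ) := by
  cases n <;> rfl

theorem approx_lab (L : ℕ) (φ : SCLFormula V) :
    approx n e b (.lab L φ) = approx n (Function.update e L (some (.lab L φ))) b φ := by
  cases n <;> rfl

theorem approx_zero_claim (L : ℕ) :
    approx 0 e b (.claim L : SCLFormula V) = if b then .bot else .not .bot := rfl

theorem approx_succ_claim_of_eq_none {L : ℕ} (h : e L = none) :
    approx (n + 1) e b (.claim L) = if b then .bot else .not .bot := by
  simp [approx, approxCore, h]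

theorem approx_succ_claim_of_eq_some {L : ℕ} {χ : SCLFormula V} (h : e L = some χ) :
    approx (n + 1) e b (.claim L) = approx n e b χ := by
  simp [approx, approxCore, h]

end Approx

section Correctness

variable {V : Vocab} {M : Struct.{u} V} {n : ℕ}

def ApproxCorrect (M : Struct.{u} V) (n : ℕ) (φ : SCLFormula V) : Prop :=
  ∀ e s b, (gameB M).HasWinningStrategy .eloise (⟨φ, e, s, b⟩, n) ↔
    (FOSat M s (approx n e b φ) ↔ b = true)

theorem approxCorrect_of_isFOAtom {φ : SCLFormula V} (hφ : φ.IsFOAtom) : ApproxCorrect M n φ := by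
  intro e s b
  rw [GameArena.hasWinningStrategy_iff_of_deadEnd (gameB_not_isInfPlay M)
    (deadEnd_of_isFOAtom hφ), approx_of_isFOAtom n e b hφ]
  cases φ <;> first | exact (hφ : False).elim | simp [gameB, posWin, hφ, atomSat, FOSat]

theorem approxCorrect_of_forall_claim (hclaim : ∀ L, ApproxCorrect M n (.claim L))
    (φ : SCLFormula V) : ApproxCorrect M n φ := by
  have a : M.Dom := Classical.arbitrary _
  induction φ with
  | bot | eq | rel => exact approxCorrect_of_isFOAtom trivial
  | claim L => exact hclaim L
  | not φ ih =>
    intro e s b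
    rw [gameB_hasWinningStrategy_iff_exists rfl ⟨_, .neg ..⟩]
    simp only [bStep_not_iff, exists_eq_left, ih _ _ _, approx_not, FOSat]
    cases b <;> simp
  | lab L φ ih =>
    intro e s b
    rw [gameB_hasWinningStrategy_iff_exists rfl ⟨_, .labStep ..⟩]
    simp only [bStep_lab_iff, exists_eq_left, ih _ _ _, approx_lab]
  | and φ ψ ihφ ihψ =>
    rintro e s (_ | _)
    · rw [gameB_hasWinningStrategy_iff_exists rfl ⟨_, .andLeft ..⟩]
      simp [bStep_and_iff, ihφ _ _ _, ihψ _ _ _, approx_and, FOSat]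
      tauto
    · rw [gameB_hasWinningStrategy_iff_forall rfl ⟨_, .andLeft ..⟩]
      simp [bStep_and_iff, ihφ _ _ _, ihψ _ _ _, approx_and, FOSat]
  | or φ ψ ihφ ihψ =>
    rintro e s (_ | _)
    · rw [gameB_hasWinningStrategy_iff_forall rfl ⟨_, .orLeft ..⟩]
      simp [bStep_or_iff, ihφ _ _ _, ihψ _ _ _, approx_or, FOSat]
    · rw [gameB_hasWinningStrategy_iff_exists rfl ⟨_, .orLeft ..⟩]
      simp [bStep_or_iff, ihφ _ _ _, ihψ _ _ _, approx_or, FOSat]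
  | ex x φ ih =>
    rintro e s (_ | _)
    · rw [gameB_hasWinningStrategy_iff_forall rfl ⟨_, .exStep _ _ _ _ _ _ a⟩]
      simp [bStep_ex_iff, ih _ _ _, approx_ex, FOSat]
    · rw [gameB_hasWinningStrategy_iff_exists rfl ⟨_, .exStep _ _ _ _ _ _ a⟩]
      simp [bStep_ex_iff, ih _ _ _, approx_ex, FOSat]
  | all x φ ih =>
    rintro e s (_ | _)
    · rw [gameB_hasWinningStrategy_iff_exists rfl ⟨_, .allStep _ _ _ _ _ _ a⟩]
      simp [bStep_all_iff, ih _ _ _, approx_all, FOSat]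
    · rw [gameB_hasWinningStrategy_iff_forall rfl ⟨_, .allStep _ _ _ _ _ _ a⟩]
      simp [bStep_all_iff, ih _ _ _, approx_all, FOSat]

theorem gameB_hasWinningStrategy_claim_iff_of_deadEnd {L : ℕ} {e : ℕ → Option (SCLFormula V)}
    {s : ℕ → M.Dom} {b : Bool} (hd : (gameB M).DeadEnd (⟨.claim L, e, s, b⟩, n)) :
    (gameB M).HasWinningStrategy .eloise (⟨.claim L, e, s, b⟩, n) ↔
      (FOSat M s (if b then .bot else .not .bot) ↔ b = true) := by
  rw [GameArena.hasWinningStrategy_iff_of_deadEnd (gameB_not_isInfPlay M) hd]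
  cases b <;> simp [gameB, posWin, SCLFormula.IsFOAtom, FOSat]

theorem approxCorrect_zero_claim (L : ℕ) : ApproxCorrect M 0 (.claim L) := by
  intro e s b
  rw [approx_zero_claim]
  exact gameB_hasWinningStrategy_claim_iff_of_deadEnd fun x hx => by
    simp [gameB, bStep_claim_iff] at hx

theorem approxCorrect_succ_claim (ih : ∀ φ, ApproxCorrect M n φ) (L : ℕ) :
    ApproxCorrect M (n + 1) (.claim L) := by
  intro e s b
  cases he : e L with
  | none =>
    rw [approx_succ_claim_of_eq_none n e b he]
    exact gameB_hasWinningStrategy_claim_iff_of_deadEnd fun x hx => by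
      simp [gameB, bStep_claim_iff, he] at hx
  | some χ =>
    rw [gameB_hasWinningStrategy_iff_exists rfl ⟨_, .claimStep _ _ _ _ _ _ he⟩,
      approx_succ_claim_of_eq_some n e b he]
    simp [bStep_claim_iff, he, ih χ e s b]

theorem approxCorrect (n : ℕ) (φ : SCLFormula V) : ApproxCorrect M n φ := by
  induction n generalizing φ with
  | zero => exact approxCorrect_of_forall_claim approxCorrect_zero_claim φ
  | succ n ih => exact approxCorrect_of_forall_claim (approxCorrect_succ_claim ih) φ

end Correctness

/-- Eloise has a winning strategy in the `n`-bounded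
evaluation game `G_n(𝔄,s,φ)` iff `𝔄,s ⊨ Φⁿ_φ` in first-order logic
(equivalently, iff she wins the standard FO evaluation game on the `n`-th
approximant). -/
theorem bounded_game_iff_approximant {V : Vocab} (φ : SCLFormula V)
    (M : Struct.{u} V) (s : ℕ → M.Dom) (n : ℕ) :
    (gameB M).HasWinningStrategy .eloise (initPos φ s, n) ↔
      FOSat M s (approximant φ n) := by
  simpa [initPos, approximant] using approxCorrect n φ (fun _ => none) s true
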